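/- Let A be a Banach algebra and φ a non-zero multiplicative linear functional on A. If A is left φ-amenable, then A is left φ-biflat; explicitly, if M ∈ A** satisfies a·M = φ(a)M for all a ∈ A and φ̃(M) = 1, then the map η : A → (A⊗_p A)** defined by η(a) = φ(a) M⊗M is a bounded linear map satisfying η(ab) = a·η(b) = φ(b)η(a) and φ̃∘π_A**∘η(a) = φ(a) for all a, b ∈ A. -/

import Mathlib

/-!
We realize the bidual `(B ⊗_p B)**` of the projective tensor product of a Banach algebra `B`
with itself canonically as the dual of the Banach space `B →L[ℂ] B* ` of bounded bilinear
forms on `B` (the latter being isometrically isomorphic to `(B ⊗_p B)*`).  All the canonical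
Banach `B`-bimodule actions are spelled out explicitly through this identification.
The multiplication of the Banach algebra `B` is encoded as a bounded bilinear map
`μ : B →L[ℂ] B →L[ℂ] B` (for a Banach algebra `A`, `μ = ContinuousLinearMap.mul ℂ A`).
-/

noncomputable section

open ContinuousLinearMap NormedSpace

/-- The space of bounded bilinear forms on `B`, canonically the dual of the projective
tensor product `B ⊗_p B`. -/
abbrev BilForm (B : Type*) [NormedAddCommGroup B] [NormedSpace ℂ B] : Type _ :=
  B →L[ℂ] StrongDual ℂ B

instance (B : Type*) [NormedAddCommGroup B] [NormedSpace ℂ B] :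
    NormedAddCommGroup (BilForm B) :=
  ContinuousLinearMap.toNormedAddCommGroup

instance (B : Type*) [NormedAddCommGroup B] [NormedSpace ℂ B] : NormedSpace ℂ (BilForm B) :=
  ContinuousLinearMap.toNormedSpace

/-- The bidual of the projective tensor product `B ⊗_p B`, realized canonically as the dual of
the Banach space of bounded bilinear forms on `B`. -/
abbrev TensorBidual (B : Type*) [NormedAddCommGroup B] [NormedSpace ℂ B] : Type _ :=
  StrongDual ℂ (BilForm B)

/-- The bidual `B**` of a normed space `B`. -/
abbrev Bidual (B : Type*) [NormedAddCommGroup B] [NormedSpace ℂ B] : Type _ :=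
  StrongDual ℂ (StrongDual ℂ B)

variable {B : Type*} [NormedAddCommGroup B] [NormedSpace ℂ B]

/-- The left action of `a ∈ B` (with multiplication `μ`) on `(B ⊗_p B)**`:
`(a • T) β = T ((x, y) ↦ β (a x, y))`, the canonical bidual extension of the
`B`-bimodule action `a • (x ⊗ y) = (a x) ⊗ y` on `B ⊗_p B`. -/
def tensorLSmul (μ : B →L[ℂ] B →L[ℂ] B) (a : B) (T : TensorBidual B) : TensorBidual B :=
  T.comp ((compL ℂ B B (StrongDual ℂ B)).flip (μ a))

/-- The right action of `a ∈ B` on `(B ⊗_p B)**`: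
`(T • a) β = T ((x, y) ↦ β (x, y a))`, the canonical bidual extension of the
`B`-bimodule action `(x ⊗ y) • a = x ⊗ (y a)` on `B ⊗_p B`. -/
def tensorRSmul (μ : B →L[ℂ] B →L[ℂ] B) (T : TensorBidual B) (a : B) : TensorBidual B :=
  T.comp (compL ℂ B (StrongDual ℂ B) (StrongDual ℂ B) ((compL ℂ B B ℂ).flip (μ.flip a)))

/-- `π_B^* ψ`, the image of a functional `ψ ∈ B*` under the adjoint of the product
morphism `π_B : B ⊗_p B → B`; as a bilinear form it is `(x, y) ↦ ψ (x y)`.  Thus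
`π_B** T ψ = T (piDual μ ψ)` for `T ∈ (B ⊗_p B)**`. -/
def piDual (μ : B →L[ℂ] B →L[ℂ] B) (ψ : StrongDual ℂ B) : BilForm B :=
  (compL ℂ B B ℂ ψ).comp μ

/-- The left action of `a ∈ B` on the bidual `B**`: `(a • m) f = m (f ∘ (a * ·))`. -/
def bidualLSmul (μ : B →L[ℂ] B →L[ℂ] B) (a : B) (m : Bidual B) : Bidual B :=
  m.comp ((compL ℂ B B ℂ).flip (μ a))

/-- A Banach algebra `B` (with multiplication `μ` and a multiplicative functional `ψ`) is
*left `ψ`-biflat* if there is a bounded linear map `ρ : B → (B ⊗_p B)**` with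
`ρ (a b) = ψ (b) ρ (a) = a • ρ (b)` for all `a, b ∈ B`, and `ψ̃ ∘ π_B** ∘ ρ = ψ`
(note `(ψ̃ ∘ π_B**) T = T (piDual μ ψ)`). -/
def IsLeftBiflat (μ : B →L[ℂ] B →L[ℂ] B) (ψ : StrongDual ℂ B) : Prop :=
  ∃ ρ : B →L[ℂ] TensorBidual B,
    (∀ a b : B, ρ (μ a b) = ψ b • ρ a ∧ ρ (μ a b) = tensorLSmul μ a (ρ b)) ∧
    ∀ a : B, ρ a (piDual μ ψ) = ψ a

/-- A Banach algebra `B` is *left `ψ`-amenable* if there is `m ∈ B**` with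
`a • m = ψ (a) m` for all `a ∈ B` and `ψ̃ (m) = m (ψ) = 1`. -/
def IsLeftAmenable (μ : B →L[ℂ] B →L[ℂ] B) (ψ : StrongDual ℂ B) : Prop :=
  ∃ m : Bidual B, (∀ (a : B) (f : StrongDual ℂ B), m (f.comp (μ a)) = ψ a * m f) ∧ m ψ = 1

/-- The elementary tensor `M ⊗ N ∈ (B ⊗_p B)**` of two elements `M, N ∈ B**`, i.e. the image
of `(M, N)` under the canonical bounded bilinear extension `B** × B** → (B ⊗_p B)**`:
`(M ⊗ N) β = M (x ↦ N (β x))`. -/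
def tensorElem (M N : Bidual B) : TensorBidual B :=
  M.comp (compL ℂ B (StrongDual ℂ B) ℂ N)

section LeftInvariant

variable (μ : B →L[ℂ] B →L[ℂ] B) (ψ : StrongDual ℂ B)

theorem tensorLSmul_tensorElem (a : B) (M N : Bidual B) :
    tensorLSmul μ a (tensorElem M N) = tensorElem (bidualLSmul μ a M) N :=
  rfl

theorem tensorElem_smul_left (c : ℂ) (M N : Bidual B) :
    tensorElem (c • M) N = c • tensorElem M N :=
  rfl

theorem tensorLSmul_smul (a : B) (c : ℂ) (T : TensorBidual B) :
    tensorLSmul μ a (c • T) = c • tensorLSmul μ a T :=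
  rfl

theorem tensorElem_piDual_of_left_invariant {N : Bidual B}
    (hN : ∀ a : B, bidualLSmul μ a N = ψ a • N) (M : Bidual B) :
    tensorElem M N (piDual μ ψ) = M ψ * N ψ := by
  -- the form `x ↦ N (y ↦ ψ (x y))` is `N ψ • ψ`
  have hform : (compL ℂ B (StrongDual ℂ B) ℂ N) (piDual μ ψ) = N ψ • ψ := by
    ext x
    show bidualLSmul μ x N ψ = N ψ * ψ x
    rw [hN, smul_apply, smul_eq_mul, mul_comm]
  simp only [tensorElem, comp_apply, hform, map_smul, smul_eq_mul, mul_comm]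

variable {μ ψ}

theorem smulRight_mul_eq_smul (hψ_mul : ∀ a b : B, ψ (μ a b) = ψ a * ψ b)
    (T : TensorBidual B) (a b : B) :
    ψ.smulRight T (μ a b) = ψ b • ψ.smulRight T a := by
  simp only [smulRight_apply, hψ_mul, smul_smul, mul_comm]

theorem smulRight_mul_eq_tensorLSmul (hψ_mul : ∀ a b : B, ψ (μ a b) = ψ a * ψ b)
    {T : TensorBidual B} (hT : ∀ a : B, tensorLSmul μ a T = ψ a • T) (a b : B) :
    ψ.smulRight T (μ a b) = tensorLSmul μ a (ψ.smulRight T b) := by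
  simp only [smulRight_apply, tensorLSmul_smul, hT, hψ_mul, smul_smul, mul_comm]

theorem smulRight_apply_piDual {T : TensorBidual B} (hT : T (piDual μ ψ) = 1) (a : B) :
    ψ.smulRight T a (piDual μ ψ) = ψ a := by
  simp [hT]

theorem isLeftBiflat_of_left_invariant (hψ_mul : ∀ a b : B, ψ (μ a b) = ψ a * ψ b)
    {T : TensorBidual B} (hT : ∀ a : B, tensorLSmul μ a T = ψ a • T)
    (hT_one : T (piDual μ ψ) = 1) : IsLeftBiflat μ ψ :=
  ⟨ψ.smulRight T, fun a b =>
    ⟨smulRight_mul_eq_smul hψ_mul T a b, smulRight_mul_eq_tensorLSmul hψ_mul hT a b⟩,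
    smulRight_apply_piDual hT_one⟩

end LeftInvariant

variable {A : Type*} [NonUnitalNormedRing A] [NormedSpace ℂ A]
  [IsScalarTower ℂ A A] [SMulCommClass ℂ A A] [CompleteSpace A]

theorem left_phi_biflat_of_left_phi_amenable_general
    (φ : A →L[ℂ] ℂ)
    (hφ_mul : ∀ a b : A, φ (a * b) = φ a * φ b)
    (M : Bidual A)
    (hM : ∀ a : A, bidualLSmul (ContinuousLinearMap.mul ℂ A) a M = φ a • M)
    (hM_one : M φ = 1) :
    IsLeftBiflat (ContinuousLinearMap.mul ℂ A) φ ∧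
    (∀ a b : A, φ.smulRight (tensorElem M M) (a * b) =
        tensorLSmul (ContinuousLinearMap.mul ℂ A) a (φ.smulRight (tensorElem M M) b) ∧
      φ.smulRight (tensorElem M M) (a * b) = φ b • φ.smulRight (tensorElem M M) a) ∧
    ∀ a : A, φ.smulRight (tensorElem M M) a (piDual (ContinuousLinearMap.mul ℂ A) φ) = φ a := by
  have hT : ∀ a : A, tensorLSmul (mul ℂ A) a (tensorElem M M) = φ a • tensorElem M M := by
    intro a
    rw [tensorLSmul_tensorElem, hM, tensorElem_smul_left]
  have hT_one : tensorElem M M (piDual (mul ℂ A) φ) = 1 := by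
    rw [tensorElem_piDual_of_left_invariant _ _ hM, hM_one, one_mul]
  exact ⟨isLeftBiflat_of_left_invariant (μ := mul ℂ A) hφ_mul hT hT_one,
    fun a b => ⟨smulRight_mul_eq_tensorLSmul (μ := mul ℂ A) hφ_mul hT a b,
      smulRight_mul_eq_smul (μ := mul ℂ A) hφ_mul _ a b⟩,
    smulRight_apply_piDual hT_one⟩

/-- if `A` is left `φ`-amenable, witnessed by `M ∈ A**` with
`a • M = φ (a) M` for all `a ∈ A` and `φ̃ (M) = 1`, then `A` is left `φ`-biflat;
explicitly, the bounded linear map `η : A → (A ⊗_p A)**`, `η (a) = φ (a) (M ⊗ M)`,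
satisfies `η (a b) = a • η (b) = φ (b) η (a)` and `φ̃ (π_A** (η (a))) = φ (a)` for all
`a, b ∈ A`. -/
theorem left_phi_biflat_of_left_phi_amenable
    (φ : A →L[ℂ] ℂ) (hφ_ne : φ ≠ 0)
    (hφ_mul : ∀ a b : A, φ (a * b) = φ a * φ b)
    (M : Bidual A)
    (hM : ∀ a : A, bidualLSmul (ContinuousLinearMap.mul ℂ A) a M = φ a • M)
    (hM_one : M φ = 1) :
    IsLeftBiflat (ContinuousLinearMap.mul ℂ A) φ ∧
    (∀ a b : A, φ.smulRight (tensorElem M M) (a * b) =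
        tensorLSmul (ContinuousLinearMap.mul ℂ A) a (φ.smulRight (tensorElem M M) b) ∧
      φ.smulRight (tensorElem M M) (a * b) = φ b • φ.smulRight (tensorElem M M) a) ∧
    ∀ a : A, φ.smulRight (tensorElem M M) a (piDual (ContinuousLinearMap.mul ℂ A) φ) = φ a :=
  left_phi_biflat_of_left_phi_amenable_general φ hφ_mul M hM hM_one
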